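/- arXiv:2511.02262 — 5 statements merged into one kernel-verified Lean document; each statement's English description precedes it below -/
import Mathlib

section
/- Let g ≥ 1 be an integer and q a real number with q > (8g+1)². If N and M are positive integers with N dividing M and both N and M lie in the interval [(√q − 1)^{2g}, (√q + 1)^{2g}], then N = M. -/
/-- **Unique multiple in the Hasse–Weil interval.**
Let `g ≥ 1` and let `q` be a real number with `q > (8g+1)²`. If `N` and `M` are positive
integers with `N ∣ M`, both lying in the interval `[(√q − 1)^(2g), (√q + 1)^(2g)]`,
then `N = M`. -/
theorem hasseWeil_unique_multiple (g : ℕ) (hg : 1 ≤ g) (q : ℝ)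
    (hq : ((8 * g + 1 : ℕ) : ℝ) ^ 2 < q)
    (N M : ℕ) (hN : 0 < N) (hM : 0 < M) (hdvd : N ∣ M)
    (hN₁ : (Real.sqrt q - 1) ^ (2 * g) ≤ (N : ℝ)) (hN₂ : (N : ℝ) ≤ (Real.sqrt q + 1) ^ (2 * g))
    (hM₁ : (Real.sqrt q - 1) ^ (2 * g) ≤ (M : ℝ)) (hM₂ : (M : ℝ) ≤ (Real.sqrt q + 1) ^ (2 * g)) :
    N = M := by
  by_contra hne
  set s := Real.sqrt q with hs
  have hg1 : (1 : ℝ) ≤ (g : ℝ) := by exact_mod_cast hg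
  have hcast : ((8 * g + 1 : ℕ) : ℝ) = 8 * (g : ℝ) + 1 := by push_cast; ring
  have hgs : 8 * (g : ℝ) + 1 < s := by
    rw [hs]
    rw [hcast] at hq
    exact (Real.lt_sqrt (by positivity)).mpr hq
  have hspos : (0 : ℝ) < s + 1 := by linarith
  -- Bernoulli: (1 + n*a) ≤ (1+a)^n with a = -2/(s+1)
  have hbern := one_add_mul_le_pow (a := -2 / (s + 1)) (n := 2 * g) (by
    have : 0 ≤ 2 / (s + 1) := by positivity
    have h2 : 2 / (s + 1) ≤ 2 := by
      rw [div_le_iff₀ hspos]; nlinarith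
    rw [neg_div]; linarith)
  have heq : 1 + (-2 / (s + 1)) = (s - 1) / (s + 1) := by
    field_simp; ring
  rw [heq] at hbern
  have hfrac : (1 : ℝ) / 2 < ((s - 1) / (s + 1)) ^ (2 * g) := by
    refine lt_of_lt_of_le ?_ hbern
    have : (2 * g : ℕ) * (-2 / (s + 1)) = -(4 * (g : ℝ) / (s + 1)) := by
      push_cast; ring
    rw [this]
    have : 4 * (g : ℝ) / (s + 1) < 1 / 2 := by
      rw [div_lt_div_iff₀ hspos (by norm_num)]; nlinarith
    linarith
  have hkey : (s + 1) ^ (2 * g) < 2 * (s - 1) ^ (2 * g) := by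
    have hp : (0 : ℝ) < (s + 1) ^ (2 * g) := by positivity
    rw [div_pow] at hfrac
    rw [lt_div_iff₀ hp] at hfrac
    linarith
  -- N ∣ M, N ≠ M ⟹ M ≥ 2N
  obtain ⟨k, rfl⟩ := hdvd
  have hk2 : 2 ≤ k := by
    rcases k with _ | _ | k
    · omega
    · simp at hne
    · omega
  have hMN : (2 : ℝ) * N ≤ (N * k : ℕ) := by
    push_cast
    have h1N : (1:ℝ) ≤ N := by exact_mod_cast hN
    have h2k : (2:ℝ) ≤ k := by exact_mod_cast hk2
    nlinarith
  nlinarith [hN₁, hM₂]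
end

section
/- Let n ≥ 1 and k ≥ 1 be integers and let S be a nonempty finite subset of F₂ⁿ with 2·|S| ≤ 2^k. Then the probability, over a uniformly random triple (A, b, y) with A a k×n matrix over F₂ and b, y ∈ F₂^k, that there exists x ∈ S with A·x + b = y, is at least (3/4)·|S|/2^k. Equivalently, the number of triples (A, b, y) for which some x ∈ S satisfies A·x + b = y is at least (3/4)·|S|·2^{kn + k}. -/
/-!
Write `E x` for the set of triples `(A, b, y)` with `A x + b = y`. Each `E x` has `2^(kn+k)`
elements. For `x ≠ x'`, the intersection `E x ∩ E x'` is cut out by `A (x - x') = 0` and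
`y = A x + b`, and `A ↦ A (x - x')` is onto, so it has `2^(kn)` elements. The second Bonferroni
inequality gives `|⋃ E x| ≥ |S| 2^(kn+k) - |S|² 2^(kn) / 2`, and `2 |S| ≤ 2^k` makes the
subtracted term at most a quarter of the first.
-/

open Finset Matrix

namespace Finset

lemma two_mul_card_le_two_add_card_offDiag {ι : Type*} {t : Finset ι} (ht : t.Nonempty) :
    2 * #t ≤ 2 + #t.offDiag := by
  obtain ⟨d, hd⟩ : ∃ d, #t = d + 1 := Nat.exists_eq_succ_of_ne_zero ht.card_ne_zero
  have hsq : (d + 1) * (d + 1) = d * (d + 1) + (d + 1) := by ring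
  rw [offDiag_card, hd, hsq, Nat.add_sub_cancel]
  nlinarith [Nat.le_mul_self d]

theorem two_mul_sum_card_le_card_biUnion_add_sum_card_inter {ι α : Type*} [DecidableEq α]
    (s : Finset ι) (E : ι → Finset α) :
    2 * ∑ i ∈ s, #(E i) ≤ 2 * #(s.biUnion E) + ∑ p ∈ s.offDiag, #(E p.1 ∩ E p.2) := by
  set U := s.biUnion E
  -- A point lying in `d` of the sets is counted `d` times on the left and `d (d - 1)` times by
  -- the pairs, and `2 d ≤ 2 + d (d - 1)` once `d ≥ 1`.
  have hsum : ∑ i ∈ s, #(E i) = ∑ a ∈ U, #{i ∈ s | a ∈ E i} :=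
    calc ∑ i ∈ s, #(E i) = ∑ i ∈ s, #(U.bipartiteAbove (fun i a => a ∈ E i) i) := by
          refine sum_congr rfl fun i hi => ?_
          rw [bipartiteAbove, filter_mem_eq_inter, inter_eq_right.2 (subset_biUnion_of_mem E hi)]
      _ = _ := sum_card_bipartiteAbove_eq_sum_card_bipartiteBelow _
  have hpairs :
      ∑ p ∈ s.offDiag, #(E p.1 ∩ E p.2) = ∑ a ∈ U, #({i ∈ s | a ∈ E i}.offDiag) :=
    calc ∑ p ∈ s.offDiag, #(E p.1 ∩ E p.2)
        = ∑ p ∈ s.offDiag, #(U.bipartiteAbove (fun p a => a ∈ E p.1 ∩ E p.2) p) := by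
          refine sum_congr rfl fun p hp => ?_
          rw [bipartiteAbove, filter_mem_eq_inter, inter_eq_right.2
            (inter_subset_left.trans (subset_biUnion_of_mem E (mem_offDiag.1 hp).1))]
      _ = _ := sum_card_bipartiteAbove_eq_sum_card_bipartiteBelow _
      _ = _ := by
          refine sum_congr rfl fun a _ => congrArg card ?_
          ext p
          simp only [bipartiteBelow, mem_filter, mem_offDiag, mem_inter]
          tauto
  have hpoint :
      ∀ a ∈ U, 2 * #{i ∈ s | a ∈ E i} ≤ 2 + #({i ∈ s | a ∈ E i}.offDiag) := by
    intro a ha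
    obtain ⟨i, hi, hai⟩ := mem_biUnion.1 ha
    exact two_mul_card_le_two_add_card_offDiag ⟨i, mem_filter.2 ⟨hi, hai⟩⟩
  calc 2 * ∑ i ∈ s, #(E i) = ∑ a ∈ U, 2 * #{i ∈ s | a ∈ E i} := by rw [hsum, mul_sum]
    _ ≤ ∑ a ∈ U, (2 + #({i ∈ s | a ∈ E i}.offDiag)) := sum_le_sum hpoint
    _ = _ := by rw [sum_add_distrib, hpairs, sum_const, smul_eq_mul, mul_comm]

end Finset

variable {m n : Type*} [Fintype m] [Fintype n] [DecidableEq m] [DecidableEq n]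

section Semiring

variable {R : Type*} [Semiring R] [Fintype R] [DecidableEq R]

def hitTriples (x : n → R) : Finset (Matrix m n R × (m → R) × (m → R)) :=
  {t | t.1 *ᵥ x + t.2.1 = t.2.2}

@[simps]
def hashGraph (x : n → R) :
    Matrix m n R × (m → R) ↪ Matrix m n R × (m → R) × (m → R) where
  toFun p := (p.1, p.2, p.1 *ᵥ x + p.2)
  inj' p q h := by simp_all [Prod.ext_iff]

lemma hitTriples_eq_map (x : n → R) :
    hitTriples (m := m) x = univ.map (hashGraph x) := by
  ext ⟨A, b, y⟩
  simp [hitTriples, eq_comm]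

lemma card_hitTriples (x : n → R) :
    #(hitTriples (m := m) x) = Fintype.card (Matrix m n R) * Fintype.card (m → R) := by
  rw [hitTriples_eq_map, card_map, card_univ, Fintype.card_prod]

end Semiring

section Field

variable {K : Type*} [Field K] [Fintype K] [DecidableEq K]

lemma card_filter_mulVec_eq_zero_mul {v : n → K} (hv : v ≠ 0) :
    #{A : Matrix m n K | A *ᵥ v = 0} * Fintype.card (m → K) = Fintype.card (Matrix m n K) := by
  let f : Matrix m n K →+ (m → K) := AddMonoidHom.mk' (· *ᵥ v) fun A B => add_mulVec A B v
  obtain ⟨u, hu⟩ : ∃ u : n → K, u ⬝ᵥ v = 1 := by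
    obtain ⟨j, hj⟩ := Function.ne_iff.1 hv
    exact ⟨Pi.single j (v j)⁻¹, by simpa [single_dotProduct] using inv_mul_cancel₀ hj⟩
  have hf : Function.Surjective f := fun w => ⟨vecMulVec w u, by simp [f, vecMulVec_mulVec, hu]⟩
  have hfib := card_eq_sum_card_fiberwise (s := univ) (t := univ) (f := f)
    fun _ _ => mem_coe.2 (mem_univ _)
  rw [card_univ, sum_congr rfl fun w _ => AddMonoidHom.card_fiber_eq_of_mem_range f (hf w) (hf 0),
    sum_const, card_univ, smul_eq_mul] at hfib
  rw [hfib, mul_comm]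
  rfl

lemma hitTriples_inter_eq_map {x y : n → K} :
    hitTriples (m := m) x ∩ hitTriples y
      = (({A | A *ᵥ (x - y) = 0} : Finset (Matrix m n K)) ×ˢ (univ : Finset (m → K))).map
          (hashGraph x) := by
  ext ⟨A, b, z⟩
  simp only [hitTriples, mem_inter, mem_filter, mem_univ, true_and, mem_map, mem_product,
    hashGraph_apply, Prod.mk.injEq, Prod.exists, mulVec_sub, sub_eq_zero]
  constructor
  · rintro ⟨hx, hy⟩
    exact ⟨A, b, ⟨add_right_cancel (hx.trans hy.symm), trivial⟩, rfl, rfl, hx⟩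
  · rintro ⟨A, b, ⟨hxy, -⟩, rfl, rfl, rfl⟩
    exact ⟨rfl, by rw [hxy]⟩

lemma card_hitTriples_inter {x y : n → K} (hxy : x ≠ y) :
    #(hitTriples (m := m) x ∩ hitTriples y) = Fintype.card (Matrix m n K) := by
  rw [hitTriples_inter_eq_map, card_map, card_product, card_univ,
    card_filter_mulVec_eq_zero_mul (sub_ne_zero.2 hxy)]

theorem two_mul_card_mul_le_card_biUnion_hitTriples (S : Finset (n → K)) :
    2 * (#S * (Fintype.card (Matrix m n K) * Fintype.card (m → K)))
      ≤ 2 * #(S.biUnion (hitTriples (m := m))) + #S.offDiag * Fintype.card (Matrix m n K) := by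
  have h := two_mul_sum_card_le_card_biUnion_add_sum_card_inter S (hitTriples (m := m))
  rwa [sum_congr rfl fun x _ => card_hitTriples x,
    sum_congr rfl fun p hp => card_hitTriples_inter (mem_offDiag.1 hp).2.2,
    sum_const, sum_const, smul_eq_mul, smul_eq_mul] at h

end Field

theorem goldwasser_sipser_lower_bound_general (n k : ℕ)
    (S : Finset (Fin n → ZMod 2)) (hsize : 2 * S.card ≤ 2 ^ k) :
    (3 : ℝ) / 4 * (S.card : ℝ) / 2 ^ k ≤
      ((Finset.univ.filter
        (fun t : Matrix (Fin k) (Fin n) (ZMod 2) × (Fin k → ZMod 2) × (Fin k → ZMod 2) =>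
          ∃ x ∈ S, t.1.mulVec x + t.2.1 = t.2.2)).card : ℝ) / 2 ^ (k * n + 2 * k) ∧
    (3 : ℝ) / 4 * (S.card : ℝ) * 2 ^ (k * n + k) ≤
      ((Finset.univ.filter
        (fun t : Matrix (Fin k) (Fin n) (ZMod 2) × (Fin k → ZMod 2) × (Fin k → ZMod 2) =>
          ∃ x ∈ S, t.1.mulVec x + t.2.1 = t.2.2)).card : ℝ) := by
  set U := Finset.univ.filter
    (fun t : Matrix (Fin k) (Fin n) (ZMod 2) × (Fin k → ZMod 2) × (Fin k → ZMod 2) =>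
      ∃ x ∈ S, t.1.mulVec x + t.2.1 = t.2.2)
  have hU : U = S.biUnion hitTriples := by ext t; simp [U, hitTriples]
  have hM : Fintype.card (Matrix (Fin k) (Fin n) (ZMod 2)) = 2 ^ (k * n) := by
    rw [Fintype.card_eq_nat_card]
    simp [Matrix, pow_mul']
  have hV : Fintype.card (Fin k → ZMod 2) = 2 ^ k := by simp
  have hcount := two_mul_card_mul_le_card_biUnion_hitTriples (m := Fin k) S
  rw [← hU, hM, hV, offDiag_card] at hcount
  have hmain : (3 : ℝ) / 4 * #S * 2 ^ (k * n + k) ≤ #U := by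
    have hcount' : (2 : ℝ) * (#S * (2 ^ (k * n) * 2 ^ k)) ≤ 2 * #U + #S * #S * 2 ^ (k * n) := by
      exact_mod_cast hcount.trans (by gcongr; exact Nat.sub_le _ _)
    have hsize' : (2 : ℝ) * #S ≤ 2 ^ k := by exact_mod_cast hsize
    have hpos : (0 : ℝ) ≤ #S * 2 ^ (k * n) := by positivity
    rw [pow_add]
    nlinarith [mul_le_mul_of_nonneg_left hsize' hpos]
  refine ⟨?_, hmain⟩
  rw [div_le_div_iff₀ (by positivity) (by positivity),
    show k * n + 2 * k = (k * n + k) + k by ring, pow_add, ← mul_assoc]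
  exact mul_le_mul_of_nonneg_right hmain (by positivity)

/-- **Goldwasser–Sipser lower bound.**
Let `n ≥ 1`, `k ≥ 1`, and let `S` be a nonempty finite subset of `F₂ⁿ` with `2·|S| ≤ 2^k`.
Then the probability, over a uniformly random triple `(A, b, y)` with `A` a `k×n` matrix over
`F₂` and `b, y ∈ F₂^k` (so over `2^(k*n + 2*k)` equally likely triples), that some `x ∈ S`
satisfies `A·x + b = y`, is at least `(3/4)·|S|/2^k`; equivalently, the number of such triples
is at least `(3/4)·|S|·2^(k*n + k)`. -/
theorem goldwasser_sipser_lower_bound (n k : ℕ) (hn : 1 ≤ n) (hk : 1 ≤ k)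
    (S : Finset (Fin n → ZMod 2)) (hS : S.Nonempty) (hsize : 2 * S.card ≤ 2 ^ k) :
    (3 : ℝ) / 4 * (S.card : ℝ) / 2 ^ k ≤
      ((Finset.univ.filter
        (fun t : Matrix (Fin k) (Fin n) (ZMod 2) × (Fin k → ZMod 2) × (Fin k → ZMod 2) =>
          ∃ x ∈ S, t.1.mulVec x + t.2.1 = t.2.2)).card : ℝ) / 2 ^ (k * n + 2 * k) ∧
    (3 : ℝ) / 4 * (S.card : ℝ) * 2 ^ (k * n + k) ≤
      ((Finset.univ.filter
        (fun t : Matrix (Fin k) (Fin n) (ZMod 2) × (Fin k → ZMod 2) × (Fin k → ZMod 2) =>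
          ∃ x ∈ S, t.1.mulVec x + t.2.1 = t.2.2)).card : ℝ) :=
  goldwasser_sipser_lower_bound_general n k S hsize
end

section
/- Let n ≥ 1 and k ≥ 2 be integers. Let S and G be finite subsets of F₂ⁿ with 2^k < 4·|S|, 2·|S| ≤ 2^k, and 2·|G| ≤ |S|. Then Pr[∃ x ∈ S : A·x + b = y] − Pr[∃ x ∈ G : A·x + b = y] > 1/16, where the probability is over a uniformly random triple (A, b, y) with A a k×n matrix over F₂ and b, y ∈ F₂^k. -/
/-!
For a fixed `x` the event `A x + b = y` has probability exactly `1/N`, `N = 2^k`, and for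
`x ≠ x'` the event `A x + b = y = A x' + b` has probability at most `1/N²`. With `s = |S|`,
Bonferroni's inequality gives `Pr_S ≥ s/N - s²/(2N²)` and the union bound gives
`Pr_G ≤ |G|/N ≤ s/(2N)`, so the gap is at least `(s/2N)(1 - s/N)`, which exceeds `1/16`
because `1/4 < s/N ≤ 1/2`.
-/

open Finset Matrix

section Bonferroni

variable {ι Ω : Type*} [DecidableEq Ω]

theorem two_mul_sum_card_le_two_mul_card_biUnion_add_sum_card_inter
    (E : ι → Finset Ω) (s : Finset ι) :
    2 * ∑ i ∈ s, #(E i) ≤ 2 * #(s.biUnion E) + ∑ p ∈ s.offDiag, #(E p.1 ∩ E p.2) := by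
  set U := s.biUnion E
  have count : ∀ t ⊆ U, #t = ∑ ω ∈ U, if ω ∈ t then 1 else 0 := by
    intro t ht
    rw [sum_boole, Nat.cast_id, filter_mem_eq_inter, inter_eq_right.2 ht]
  have hsum : ∑ i ∈ s, #(E i) = ∑ ω ∈ U, #{i ∈ s | ω ∈ E i} := by
    rw [sum_congr rfl fun i hi => count _ (subset_biUnion_of_mem E hi), sum_comm]
    simp only [sum_boole, Nat.cast_id]
  have hpairs : ∑ p ∈ s.offDiag, #(E p.1 ∩ E p.2) =
      ∑ ω ∈ U,
        (#{i ∈ s | ω ∈ E i} * #{i ∈ s | ω ∈ E i} - #{i ∈ s | ω ∈ E i}) := by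
    rw [sum_congr rfl fun p hp => count _
      (inter_subset_left.trans (subset_biUnion_of_mem E (mem_offDiag.1 hp).1)), sum_comm]
    refine sum_congr rfl fun ω _ => ?_
    rw [sum_boole, Nat.cast_id, ← offDiag_card]
    congr 1
    ext p
    simp only [mem_filter, mem_offDiag, mem_inter]
    tauto
  -- `c` counts the sets containing a point `ω`; `(c - 1) (c - 2) ≥ 0` for every natural `c`
  have pointwise (c : ℕ) : 2 * c ≤ 2 * 1 + (c * c - c) := by
    rw [← Nat.mul_sub_one]
    rcases c with _ | c
    · simp
    · simp only [Nat.add_sub_cancel]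
      nlinarith [Nat.le_mul_self c]
  rw [hsum, hpairs, card_eq_sum_ones U, mul_sum, mul_sum, ← sum_add_distrib]
  exact sum_le_sum fun ω _ => pointwise _

end Bonferroni

section HashEvent

variable {R m n : Type*} [Fintype R] [DecidableEq R] [Fintype m] [Fintype n] [DecidableEq m]
  [DecidableEq n]

def hashEvent [NonUnitalNonAssocSemiring R] (x : n → R) :
    Finset (Matrix m n R × (m → R) × (m → R)) :=
  {t | t.1 *ᵥ x + t.2.1 = t.2.2}

theorem card_hashEvent [NonUnitalNonAssocSemiring R] (x : n → R) :
    #(hashEvent (m := m) x) = Fintype.card (Matrix m n R × (m → R)) := by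
  rw [← card_univ]
  refine (card_nbij' (fun p => (p.1, p.2, p.1 *ᵥ x + p.2)) (fun t => (t.1, t.2.1))
    ?_ ?_ ?_ ?_).symm
  · simp [hashEvent]
  · simp
  · intro p _; rfl
  · rintro ⟨A, b, y⟩ h
    simp_all [hashEvent]

theorem card_biUnion_hashEvent_le [NonUnitalNonAssocSemiring R] (s : Finset (n → R)) :
    #(s.biUnion (hashEvent (m := m))) ≤ #s * Fintype.card (Matrix m n R × (m → R)) :=
  card_biUnion_le_card_mul _ _ _ fun x _ => (card_hashEvent x).le

theorem card_hashEvent_inter_le [DivisionRing R] {x x' : n → R} (hx : x ≠ x') :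
    #(hashEvent (m := m) x ∩ hashEvent x') ≤ Fintype.card (Matrix m n R) := by
  set v := x - x'
  obtain ⟨i, hi⟩ : ∃ i, v i ≠ 0 := Function.ne_iff.1 (sub_ne_zero.2 hx)
  -- `D` is a right inverse of `A ↦ A *ᵥ v`, and on the intersection `A *ᵥ v = 0`,
  -- so `A + D b` determines `b`, then `A`, then `y = A *ᵥ x + b`.
  set D : (m → R) → Matrix m n R := fun b => vecMulVec b (Pi.single i (v i)⁻¹)
  have hD : ∀ b, D b *ᵥ v = b := fun b => by
    rw [vecMulVec_mulVec, single_dotProduct, inv_mul_cancel₀ hi, MulOpposite.op_one, one_smul]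
  have hker : ∀ t ∈ hashEvent (m := m) x ∩ hashEvent x', t.1 *ᵥ v = 0 := fun t ht => by
    simp only [hashEvent, mem_inter, mem_filter, mem_univ, true_and] at ht
    rw [mulVec_sub, sub_eq_zero]
    exact add_right_cancel (ht.1.trans ht.2.symm)
  rw [← card_univ]
  refine card_le_card_of_injOn (fun t => t.1 + D t.2.1) (fun _ _ => mem_coe.2 (mem_univ _)) ?_
  rintro ⟨A, b, y⟩ ht ⟨A', b', y'⟩ ht' h
  simp only at h
  obtain rfl : b = b' := by
    simpa [add_mulVec, hD, hker _ ht, hker _ ht'] using congrArg (· *ᵥ v) h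
  obtain rfl : A = A' := add_right_cancel h
  simp only [coe_inter, Set.mem_inter_iff, mem_coe, hashEvent, mem_filter, mem_univ,
    true_and] at ht ht'
  rw [← ht.1, ← ht'.1]

theorem two_mul_card_mul_le_card_biUnion_hashEvent [DivisionRing R] (s : Finset (n → R)) :
    2 * #s * Fintype.card (Matrix m n R × (m → R)) ≤
      2 * #(s.biUnion (hashEvent (m := m))) + #s * #s * Fintype.card (Matrix m n R) := by
  have hpairs : ∑ p ∈ s.offDiag, #(hashEvent (m := m) p.1 ∩ hashEvent p.2) ≤
      #s * #s * Fintype.card (Matrix m n R) :=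
    calc _ ≤ #s.offDiag * Fintype.card (Matrix m n R) :=
          sum_le_card_nsmul _ _ _ fun p hp => card_hashEvent_inter_le (mem_offDiag.1 hp).2.2
      _ ≤ _ := Nat.mul_le_mul_right _ (offDiag_card s ▸ Nat.sub_le _ _)
  have := two_mul_sum_card_le_two_mul_card_biUnion_add_sum_card_inter (hashEvent (m := m)) s
  rw [sum_congr rfl fun x _ => card_hashEvent x, sum_const, smul_eq_mul, ← mul_assoc] at this
  omega

end HashEvent

theorem goldwasser_sipser_gap_general (n k : ℕ)
    (S G : Finset (Fin n → ZMod 2))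
    (hS₁ : 2 ^ k < 4 * S.card) (hS₂ : 2 * S.card ≤ 2 ^ k) (hG : 2 * G.card ≤ S.card) :
    ((Finset.univ.filter
        (fun t : Matrix (Fin k) (Fin n) (ZMod 2) × (Fin k → ZMod 2) × (Fin k → ZMod 2) =>
          ∃ x ∈ S, t.1.mulVec x + t.2.1 = t.2.2)).card : ℝ) / 2 ^ (k * n + 2 * k) -
      ((Finset.univ.filter
        (fun t : Matrix (Fin k) (Fin n) (ZMod 2) × (Fin k → ZMod 2) × (Fin k → ZMod 2) =>
          ∃ x ∈ G, t.1.mulVec x + t.2.1 = t.2.2)).card : ℝ) / 2 ^ (k * n + 2 * k) >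
      1 / 16 := by
  have hunion (T : Finset (Fin n → ZMod 2)) :
      univ.filter
          (fun t : Matrix (Fin k) (Fin n) (ZMod 2) × (Fin k → ZMod 2) × (Fin k → ZMod 2) =>
            ∃ x ∈ T, t.1 *ᵥ x + t.2.1 = t.2.2) = T.biUnion hashEvent := by
    ext; simp [hashEvent]
  have hcard : Fintype.card (Matrix (Fin k) (Fin n) (ZMod 2)) = 2 ^ (k * n) := by
    simp only [Fintype.card_congr Matrix.of.symm, Fintype.card_fun, ZMod.card, Fintype.card_fin]
    ring
  have hlow := two_mul_card_mul_le_card_biUnion_hashEvent (m := Fin k) S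
  have hup := card_biUnion_hashEvent_le (m := Fin k) G
  simp only [Fintype.card_prod, hcard, Fintype.card_pi, ZMod.card, prod_const, card_univ,
    Fintype.card_fin] at hlow hup
  rw [hunion S, hunion G, div_sub_div_same, gt_iff_lt, lt_div_iff₀ (by positivity),
    show (2 : ℝ) ^ (k * n + 2 * k) = 2 ^ (k * n) * 2 ^ k * 2 ^ k by ring]
  rify at hS₁ hS₂ hG hlow hup
  have hM : (0 : ℝ) < 2 ^ (k * n) := by positivity
  have hN : (0 : ℝ) < 2 ^ k := by positivity
  generalize (2 : ℝ) ^ (k * n) = M, (2 : ℝ) ^ k = N at *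
  have hsq : N * N < 8 * #S * (N - #S) := by nlinarith
  nlinarith [mul_lt_mul_of_pos_left hsq hM, mul_le_mul_of_nonneg_right hG (mul_pos hM hN).le]

/-- **Goldwasser–Sipser noticeable gap.**
Let `n ≥ 1`, `k ≥ 2`, and let `S, G` be finite subsets of `F₂ⁿ` with `2^k < 4·|S|`,
`2·|S| ≤ 2^k`, and `2·|G| ≤ |S|`.  Then
`Pr[∃ x ∈ S, A·x + b = y] − Pr[∃ x ∈ G, A·x + b = y] > 1/16`,
the probability being over a uniformly random triple `(A, b, y)` with `A` a `k×n` matrix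
over `F₂` and `b, y ∈ F₂^k` (so over `2^(k*n + 2*k)` equally likely triples). -/
theorem goldwasser_sipser_gap (n k : ℕ) (hn : 1 ≤ n) (hk : 2 ≤ k)
    (S G : Finset (Fin n → ZMod 2))
    (hS₁ : 2 ^ k < 4 * S.card) (hS₂ : 2 * S.card ≤ 2 ^ k) (hG : 2 * G.card ≤ S.card) :
    ((Finset.univ.filter
        (fun t : Matrix (Fin k) (Fin n) (ZMod 2) × (Fin k → ZMod 2) × (Fin k → ZMod 2) =>
          ∃ x ∈ S, t.1.mulVec x + t.2.1 = t.2.2)).card : ℝ) / 2 ^ (k * n + 2 * k) -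
      ((Finset.univ.filter
        (fun t : Matrix (Fin k) (Fin n) (ZMod 2) × (Fin k → ZMod 2) × (Fin k → ZMod 2) =>
          ∃ x ∈ G, t.1.mulVec x + t.2.1 = t.2.2)).card : ℝ) / 2 ^ (k * n + 2 * k) >
      1 / 16 :=
  goldwasser_sipser_gap_general n k S G hS₁ hS₂ hG
end

section
/- For all integers D ≥ 1 and N ≥ 2, and every positive integer M with M ≤ 4^{D^{N²}}, there exists a prime ℓ with (4D)⁴ ≤ ℓ ≤ 2¹¹·D^{N²} such that ℓ does not divide M. -/
open Finset Nat

/-- `16 t ≤ 2 ^ t` for `t ≥ 7`. -/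
private lemma aux16 : ∀ t : ℕ, 16 * (t + 7) ≤ 2 ^ (t + 7) := by
  intro t
  induction t with
  | zero => norm_num
  | succ k ih =>
    have h2 : (16 : ℕ) ≤ 2 ^ (k + 7) :=
      calc (16 : ℕ) = 2 ^ 4 := by norm_num
      _ ≤ 2 ^ (k + 7) := Nat.pow_le_pow_right (by norm_num) (by omega)
    have hstep : (2 : ℕ) ^ (k + 1 + 7) = 2 ^ (k + 7) + 2 ^ (k + 7) := by
      rw [show k + 1 + 7 = (k + 7) + 1 from rfl, pow_succ]
      ring
    omega

/-- `8 * clog 2 (s+1) ≤ s` for `s ≥ 63`. -/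
private lemma clog_bound {s : ℕ} (hs : 63 ≤ s) : 8 * Nat.clog 2 (s + 1) ≤ s := by
  set T := Nat.clog 2 (s + 1) with hT
  by_cases h7 : T ≤ 7
  · omega
  · push_neg at h7
    have hpred : 2 ^ (T - 1) < s + 1 :=
      Nat.pow_pred_clog_lt_self (by norm_num) (by omega)
    have h16 : 16 * T ≤ 2 ^ T := by
      have := aux16 (T - 7)
      have hT7 : T - 7 + 7 = T := by omega
      rwa [hT7] at this
    have hTT : 2 ^ T = 2 * 2 ^ (T - 1) := by
      rw [← pow_succ']
      congr 1
      omega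
    omega

/-- Key growth estimate: `(2n)^(sqrt(2n)+1) ≤ 2^n` for `n ≥ 1985`. -/
private lemma pow_sqrt_le {n : ℕ} (hn : 1985 ≤ n) :
    (2 * n) ^ (Nat.sqrt (2 * n) + 1) ≤ 2 ^ n := by
  set s := Nat.sqrt (2 * n) with hs
  have hs63 : 63 ≤ s := by
    rw [hs, Nat.le_sqrt]
    omega
  have hlt : 2 * n < (s + 1) * (s + 1) := Nat.lt_succ_sqrt (2 * n)
  have hsq : s * s ≤ 2 * n := Nat.sqrt_le (2 * n)
  set T := Nat.clog 2 (s + 1) with hT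
  have hTle : s + 1 ≤ 2 ^ T := Nat.le_pow_clog (by norm_num) _
  have h8T : 8 * T ≤ s := clog_bound hs63
  have h1 : (2 * n) ^ (s + 1) ≤ ((s + 1) * (s + 1)) ^ (s + 1) :=
    Nat.pow_le_pow_left (le_of_lt hlt) _
  have h2 : ((s + 1) * (s + 1)) ^ (s + 1) ≤ (2 ^ T * 2 ^ T) ^ (s + 1) :=
    Nat.pow_le_pow_left (Nat.mul_le_mul hTle hTle) _
  have h3 : (2 ^ T * 2 ^ T) ^ (s + 1) = 2 ^ (2 * T * (s + 1)) := by
    rw [← pow_add, ← pow_mul]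
    ring_nf
  have hexp : 2 * T * (s + 1) ≤ n := by
    have hmul : 4 * (T * (s + 1)) ≤ s * s := by
      calc 4 * (T * (s + 1)) ≤ 4 * (T * (2 * s)) := by
            apply Nat.mul_le_mul_left
            apply Nat.mul_le_mul_left
            omega
      _ = (8 * T) * s := by ring
      _ ≤ s * s := Nat.mul_le_mul_right _ h8T
    have hlin : 2 * T * (s + 1) = 2 * (T * (s + 1)) := by ring
    have hlin2 : 4 * (T * (s + 1)) = 2 * (2 * (T * (s + 1))) := by ring
    omega
  calc (2 * n) ^ (s + 1) ≤ 2 ^ (2 * T * (s + 1)) := by rw [← h3]; exact le_trans h1 h2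
  _ ≤ 2 ^ n := Nat.pow_le_pow_right (by norm_num) hexp

/-- The central binomial coefficient is at most `(2n)^(sqrt(2n)) * primorial (2n)`. -/
private lemma centralBinom_le (n : ℕ) (hn : 0 < n) :
    Nat.centralBinom n ≤ (2 * n) ^ (Nat.sqrt (2 * n)) * primorial (2 * n) := by
  classical
  set c := Nat.centralBinom n with hc
  have key : (∏ p ∈ Finset.range (2 * n + 1), p ^ c.factorization p) = c :=
    Nat.prod_pow_factorization_centralBinom n
  set S := (Finset.range (2 * n + 1)).filter Nat.Prime with hS
  have hfle : ∀ p, p ^ c.factorization p ≤ 2 * n := by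
    intro p
    rw [hc, Nat.centralBinom]
    exact Nat.pow_factorization_choose_le (by omega)
  calc c = ∏ p ∈ Finset.range (2 * n + 1), p ^ c.factorization p := key.symm
  _ = ∏ p ∈ S, p ^ c.factorization p := by
      rw [hS]
      refine (Finset.prod_filter_of_ne fun x _ hne => ?_).symm
      by_contra h
      exact hne (by simp [Nat.factorization_eq_zero_of_not_prime _ h])
  _ = (∏ p ∈ S.filter (fun p => p * p ≤ 2 * n), p ^ c.factorization p)
      * ∏ p ∈ S.filter (fun p => ¬ p * p ≤ 2 * n), p ^ c.factorization p :=
      (Finset.prod_filter_mul_prod_filter_not S _ _).symm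
  _ ≤ (2 * n) ^ (Nat.sqrt (2 * n)) * primorial (2 * n) := by
      apply Nat.mul_le_mul
      · -- small primes: each factor ≤ 2n, count ≤ sqrt(2n)
        calc (∏ p ∈ S.filter (fun p => p * p ≤ 2 * n), p ^ c.factorization p)
            ≤ ∏ _p ∈ S.filter (fun p => p * p ≤ 2 * n), 2 * n :=
              Finset.prod_le_prod' fun p _ => hfle p
        _ = (2 * n) ^ (S.filter (fun p => p * p ≤ 2 * n)).card := Finset.prod_const _
        _ ≤ (2 * n) ^ (Nat.sqrt (2 * n)) := by
              apply Nat.pow_le_pow_right (by omega)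
              have hsub : S.filter (fun p => p * p ≤ 2 * n)
                  ⊆ Finset.Ico 2 (Nat.sqrt (2 * n) + 1) := by
                intro p hp
                rw [Finset.mem_filter] at hp
                obtain ⟨hp1, hp2⟩ := hp
                rw [hS, Finset.mem_filter] at hp1
                rw [Finset.mem_Ico]
                refine ⟨hp1.2.two_le, ?_⟩
                rw [Nat.lt_succ_iff, Nat.le_sqrt]
                exact hp2
              calc (S.filter (fun p => p * p ≤ 2 * n)).card
                  ≤ (Finset.Ico 2 (Nat.sqrt (2 * n) + 1)).card := Finset.card_le_card hsub
              _ = Nat.sqrt (2 * n) + 1 - 2 := Nat.card_Ico _ _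
              _ ≤ Nat.sqrt (2 * n) := by omega
      · -- large primes: exponent ≤ 1
        calc (∏ p ∈ S.filter (fun p => ¬ p * p ≤ 2 * n), p ^ c.factorization p)
            ≤ ∏ p ∈ S.filter (fun p => ¬ p * p ≤ 2 * n), p := by
              apply Finset.prod_le_prod'
              intro p hp
              rw [Finset.mem_filter] at hp
              have hp1 : p.Prime := (Finset.mem_filter.mp hp.1).2
              have hlarge : 2 * n < p ^ 2 := by
                rw [pow_two]
                omega
              have hle1 : c.factorization p ≤ 1 := by
                rw [hc, Nat.centralBinom]
                exact Nat.factorization_choose_le_one hlarge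
              calc p ^ c.factorization p ≤ p ^ 1 := Nat.pow_le_pow_right hp1.pos hle1
              _ = p := pow_one p
        _ ≤ ∏ p ∈ S, p := by
              apply Finset.prod_le_prod_of_subset_of_one_le' (Finset.filter_subset _ _)
              intro p hp _
              exact ((Finset.mem_filter.mp hp).2).pos
        _ = primorial (2 * n) := rfl

/-- Chebyshev-type lower bound: `2^n < primorial (2n)` for `n ≥ 1985`. -/
private lemma two_pow_lt_primorial {n : ℕ} (hn : 1985 ≤ n) :
    2 ^ n < primorial (2 * n) := by
  have h4 : 4 ^ n < n * Nat.centralBinom n :=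
    Nat.four_pow_lt_mul_centralBinom n (by omega)
  have hcb := centralBinom_le n (by omega)
  have hchain : 4 ^ n < 2 ^ n * primorial (2 * n) := by
    calc 4 ^ n < n * Nat.centralBinom n := h4
    _ ≤ n * ((2 * n) ^ (Nat.sqrt (2 * n)) * primorial (2 * n)) := Nat.mul_le_mul_left _ hcb
    _ ≤ (2 * n) * ((2 * n) ^ (Nat.sqrt (2 * n)) * primorial (2 * n)) := by
          apply Nat.mul_le_mul_right
          omega
    _ = (2 * n) ^ (Nat.sqrt (2 * n) + 1) * primorial (2 * n) := by ring
    _ ≤ 2 ^ n * primorial (2 * n) := Nat.mul_le_mul_right _ (pow_sqrt_le hn)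
  have h4eq : (4 : ℕ) ^ n = 2 ^ n * 2 ^ n := by
    rw [show (4 : ℕ) = 2 * 2 by norm_num, mul_pow]
  rw [h4eq] at hchain
  exact lt_of_mul_lt_mul_left hchain (Nat.zero_le _)

/-- For all integers `D ≥ 1` and `N ≥ 2`, and every positive integer `M ≤ 4^(D^(N²))`,
there exists a prime `ℓ` with `(4D)⁴ ≤ ℓ ≤ 2¹¹·D^(N²)` not dividing `M`. -/
theorem exists_prime_not_dvd (D N : ℕ) (hD : 1 ≤ D) (hN : 2 ≤ N)
    (M : ℕ) (hM : 0 < M) (hMle : M ≤ 4 ^ (D ^ N ^ 2)) :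
    ∃ ℓ : ℕ, ℓ.Prime ∧ (4 * D) ^ 4 ≤ ℓ ∧ ℓ ≤ 2 ^ 11 * D ^ N ^ 2 ∧ ¬ ℓ ∣ M := by
  have hN4 : 4 ≤ N ^ 2 := by nlinarith
  rcases eq_or_lt_of_le hD with hD1 | hD2
  · -- D = 1 : take ℓ = 257
    refine ⟨257, by norm_num, ?_, ?_, ?_⟩
    · rw [← hD1]; norm_num
    · rw [← hD1]; simp
    · intro hdvd
      have : 257 ≤ M := Nat.le_of_dvd hM hdvd
      rw [← hD1] at hMle
      simp at hMle
      omega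
  · -- D ≥ 2
    set K := D ^ N ^ 2 with hKdef
    have hK16 : 16 ≤ K := by
      calc (16 : ℕ) = 2 ^ 4 := by norm_num
      _ ≤ 2 ^ N ^ 2 := Nat.pow_le_pow_right (by norm_num) hN4
      _ ≤ D ^ N ^ 2 := Nat.pow_le_pow_left hD2 _
    have hD4K : D ^ 4 ≤ K := Nat.pow_le_pow_right (by omega) hN4
    by_contra hcon
    push_neg at hcon
    set a := (4 * D) ^ 4 with hadef
    have ha : a = 256 * D ^ 4 := by rw [hadef]; ring
    set b := 2 ^ 11 * K with hbdef
    have hb : b = 2048 * K := by rw [hbdef]; norm_num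
    have haK : a ≤ 256 * K := by
      rw [ha]
      exact Nat.mul_le_mul_left _ hD4K
    have ha1 : 1 ≤ a := by
      rw [ha]
      have hD4 : 1 ≤ D ^ 4 := Nat.one_le_pow _ _ (by omega)
      omega
    have hab : a ≤ b := by omega
    -- all primes in [a, b] divide M, so their product divides M
    have hdvd : (∏ p ∈ (Finset.Ico a (b + 1)).filter Nat.Prime, p) ∣ M := by
      apply Finset.prod_primes_dvd
      · intro p hp
        exact ((Finset.mem_filter.mp hp).2).prime
      · intro p hp
        rw [Finset.mem_filter, Finset.mem_Ico] at hp
        exact hcon p hp.2 hp.1.1 (by omega)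
    -- primorial b = primorial (a-1) * (product over [a,b])
    have hsplit := primorial_add (a - 1) (b - (a - 1))
    have e1 : a - 1 + (b - (a - 1)) = b := by omega
    have e2 : a - 1 + 1 = a := by omega
    rw [e1, e2] at hsplit
    have hupper : primorial b ≤ 4 ^ (a - 1) * M := by
      rw [hsplit]
      exact Nat.mul_le_mul (primorial_le_4_pow _) (Nat.le_of_dvd hM hdvd)
    have hupper2 : primorial b ≤ 2 ^ (514 * K) := by
      calc primorial b ≤ 4 ^ (a - 1) * M := hupper
      _ ≤ 4 ^ (a - 1) * 4 ^ K := Nat.mul_le_mul_left _ hMle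
      _ = 4 ^ (a - 1 + K) := (pow_add 4 _ _).symm
      _ ≤ 4 ^ (257 * K) := Nat.pow_le_pow_right (by norm_num) (by omega)
      _ = 2 ^ (514 * K) := by
          rw [show (4 : ℕ) = 2 ^ 2 by norm_num, ← pow_mul]
          ring_nf
    have hlower : 2 ^ (1024 * K) < primorial b := by
      have hkey := two_pow_lt_primorial (n := 1024 * K) (by nlinarith)
      have hb2 : b = 2 * (1024 * K) := by omega
      rwa [hb2]
    have hfin : (2 : ℕ) ^ (1024 * K) < 2 ^ (514 * K) := lt_of_lt_of_le hlower hupper2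
    have := (Nat.pow_lt_pow_iff_right (by norm_num : 1 < 2)).mp hfin
    omega
end

section
/- Let r ≥ 1 be an integer, ℓ ≥ 5 a prime, γ ∈ F_ℓ*, and f(T) ∈ M_r^γ. Then the number of tuples (a₁, …, a_r) ∈ F_ℓ^r such that the polynomial g(T) = 1 + Σ_{i=1}^{r} a_i T^i + Σ_{i=1}^{r−1} γ^{r−i} a_i T^{2r−i} + γ^r T^{2r} is not coprime to f(T) in F_ℓ[T] is at most 4r·ℓ^{r−1}. -/
open Matrix Polynomial

/-- The set `M_r^γ` of polynomials
`f(T) = 1 + a₁T + ⋯ + a_{2r−1}T^{2r−1} + γ^r T^{2r}` with `a_{2r−i} = γ^{r−i}·a_i`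
for all `0 ≤ i ≤ 2r` (where `a₀ = 1`). -/
def Mpoly (r ℓ : ℕ) (γ : (ZMod ℓ)ˣ) : Set (Polynomial (ZMod ℓ)) :=
  {f | f.natDegree ≤ 2 * r ∧ f.coeff 0 = 1 ∧ f.coeff (2 * r) = (γ : ZMod ℓ) ^ r ∧
    ∀ i : ℕ, i ≤ 2 * r →
      f.coeff (2 * r - i) = ((γ ^ ((r : ℤ) - (i : ℤ)) : (ZMod ℓ)ˣ) : ZMod ℓ) * f.coeff i}

/-- The polynomial `g(T) = 1 + Σ_{i=1}^{r} a_i T^i + Σ_{i=1}^{r−1} γ^{r−i} a_i T^{2r−i}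
+ γ^r T^{2r}` parametrizing `M_r^γ` by the tuple `(a₁, …, a_r)`; here the tuple is given
as `a : Fin r → ZMod ℓ` with `a j` standing for `a_{j+1}`. -/
noncomputable def gpoly (r ℓ : ℕ) (γ : (ZMod ℓ)ˣ) (a : Fin r → ZMod ℓ) :
    Polynomial (ZMod ℓ) :=
  1 + (∑ j : Fin r, Polynomial.C (a j) * Polynomial.X ^ ((j : ℕ) + 1))
    + (∑ j : Fin r, if (j : ℕ) + 1 ≤ r - 1 then
        Polynomial.C ((γ : ZMod ℓ) ^ (r - ((j : ℕ) + 1)) * a j)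
          * Polynomial.X ^ (2 * r - ((j : ℕ) + 1)) else 0)
    + Polynomial.C ((γ : ZMod ℓ) ^ r) * Polynomial.X ^ (2 * r)

/-- If two tuples agree except possibly in the last coordinate, the corresponding
polynomials `g` differ by `C (a_r − a'_r)·X^r`. -/
lemma gpoly_sub {ℓ : ℕ} (k : ℕ) (γ : (ZMod ℓ)ˣ) (a a' : Fin (k+1) → ZMod ℓ)
    (h : ∀ j : Fin (k+1), (j : ℕ) < k → a j = a' j) :
    gpoly (k+1) ℓ γ a - gpoly (k+1) ℓ γ a' =
      Polynomial.C (a (Fin.last k) - a' (Fin.last k)) * Polynomial.X ^ (k+1) := by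
  have h2 : (∑ j : Fin (k+1), if (j : ℕ) + 1 ≤ (k+1) - 1 then
        Polynomial.C ((γ : ZMod ℓ) ^ ((k+1) - ((j : ℕ) + 1)) * a j)
          * Polynomial.X ^ (2 * (k+1) - ((j : ℕ) + 1)) else 0)
      = (∑ j : Fin (k+1), if (j : ℕ) + 1 ≤ (k+1) - 1 then
        Polynomial.C ((γ : ZMod ℓ) ^ ((k+1) - ((j : ℕ) + 1)) * a' j)
          * Polynomial.X ^ (2 * (k+1) - ((j : ℕ) + 1)) else 0) := by
    refine Finset.sum_congr rfl fun j _ => ?_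
    split_ifs with hj
    · rw [h j (by omega)]
    · rfl
  have h1 : (∑ j : Fin (k+1), Polynomial.C (a j) * Polynomial.X ^ ((j : ℕ) + 1))
      - (∑ j : Fin (k+1), Polynomial.C (a' j) * Polynomial.X ^ ((j : ℕ) + 1))
      = Polynomial.C (a (Fin.last k) - a' (Fin.last k)) * Polynomial.X ^ (k+1) := by
    rw [← Finset.sum_sub_distrib, Finset.sum_eq_single (Fin.last k)]
    · simp [Fin.val_last, Polynomial.C_sub, sub_mul]
    · intro j _ hj
      have hjk : (j : ℕ) < k := by
        have h1 := j.isLt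
        have h2 : (j : ℕ) ≠ k := fun hh => hj (Fin.ext hh)
        omega
      rw [h j hjk, sub_self]
    · simp
  unfold gpoly
  rw [h2, ← h1]; ring

/-- If an irreducible factor `p` of `f` (with `f(0) = 1`) divides both `g a` and `g a'`,
and `a, a'` agree except possibly in the last coordinate, then `a = a'`. -/
lemma eq_of_dvd {ℓ : ℕ} [Fact ℓ.Prime] (k : ℕ) (γ : (ZMod ℓ)ˣ)
    {f p : Polynomial (ZMod ℓ)} (hf0 : f.coeff 0 = 1)
    (hp : Irreducible p) (hpf : p ∣ f) {a a' : Fin (k+1) → ZMod ℓ}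
    (hpa : p ∣ gpoly (k+1) ℓ γ a) (hpa' : p ∣ gpoly (k+1) ℓ γ a')
    (h : ∀ j : Fin (k+1), (j : ℕ) < k → a j = a' j) : a = a' := by
  have hprime : Prime p := hp.prime
  have hd : p ∣ Polynomial.C (a (Fin.last k) - a' (Fin.last k)) * Polynomial.X ^ (k+1) := by
    rw [← gpoly_sub k γ a a' h]; exact dvd_sub hpa hpa'
  have hlast : a (Fin.last k) = a' (Fin.last k) := by
    by_contra hne
    rcases hprime.dvd_mul.mp hd with hc | hx
    · have hunit : IsUnit (Polynomial.C (a (Fin.last k) - a' (Fin.last k))) :=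
        Polynomial.isUnit_C.mpr (isUnit_iff_ne_zero.mpr (sub_ne_zero.mpr hne))
      exact hp.not_isUnit (isUnit_of_dvd_unit hc hunit)
    · have hX : p ∣ Polynomial.X := hprime.dvd_of_dvd_pow hx
      have hXp : (Polynomial.X : Polynomial (ZMod ℓ)) ∣ p :=
        (hp.associated_of_dvd Polynomial.irreducible_X hX).symm.dvd
      have hp0 : p.coeff 0 = 0 := Polynomial.X_dvd_iff.mp hXp
      obtain ⟨q, hq⟩ := hpf
      rw [hq, Polynomial.mul_coeff_zero, hp0, zero_mul] at hf0
      exact one_ne_zero hf0.symm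
  funext j
  rcases Nat.lt_or_ge (j : ℕ) k with hj | hj
  · exact h j hj
  · have : j = Fin.last k := Fin.ext (by have := j.isLt; simp [Fin.val_last]; omega)
    rw [this]; exact hlast

/-- For a fixed irreducible factor `p` of `f` (with `f(0)=1`), at most `ℓ^k` tuples `a`
satisfy `p ∣ g a`. -/
lemma card_dvd_le {ℓ : ℕ} [Fact ℓ.Prime] [NeZero ℓ] (k : ℕ) (γ : (ZMod ℓ)ˣ)
    {f p : Polynomial (ZMod ℓ)} (hf0 : f.coeff 0 = 1)
    (hp : Irreducible p) (hpf : p ∣ f) :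
    {a : Fin (k+1) → ZMod ℓ | p ∣ gpoly (k+1) ℓ γ a}.ncard ≤ ℓ ^ k := by
  classical
  rw [Set.ncard_eq_toFinset_card _ (Set.toFinite _)]
  have hinj : ((Set.toFinite {a : Fin (k+1) → ZMod ℓ | p ∣ gpoly (k+1) ℓ γ a}).toFinset :
      Set (Fin (k+1) → ZMod ℓ)).InjOn (fun a => a ∘ Fin.castSucc) := by
    intro a ha a' ha' hEq
    simp only [Set.Finite.coe_toFinset, Set.mem_setOf_eq] at ha ha'
    refine eq_of_dvd k γ hf0 hp hpf ha ha' fun j hj => ?_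
    have := congrFun hEq ⟨(j : ℕ), hj⟩
    simpa [Fin.castSucc, Fin.ext_iff] using this
  calc ((Set.toFinite _).toFinset).card
      ≤ (Finset.univ : Finset (Fin k → ZMod ℓ)).card :=
        Finset.card_le_card_of_injOn _ (fun a _ => Finset.mem_univ _) hinj
    _ = ℓ ^ k := by simp [ZMod.card]

/-- A nonzero polynomial over a field has at most `natDegree` irreducible factors
(with multiplicity). -/
lemma card_factors_le {ℓ : ℕ} [Fact ℓ.Prime] {f : Polynomial (ZMod ℓ)} (hf : f ≠ 0) :
    Multiset.card (UniqueFactorizationMonoid.factors f) ≤ f.natDegree := by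
  classical
  open UniqueFactorizationMonoid in
  have hz : (0 : Polynomial (ZMod ℓ)) ∉ factors f := fun h =>
    (UniqueFactorizationMonoid.irreducible_of_factor _ h).ne_zero rfl
  have hdeg : ((UniqueFactorizationMonoid.factors f).map Polynomial.natDegree).sum
      = (UniqueFactorizationMonoid.factors f).prod.natDegree :=
    (Polynomial.natDegree_multiset_prod _ hz).symm
  have hassoc : (UniqueFactorizationMonoid.factors f).prod.natDegree = f.natDegree := by
    obtain ⟨u, hu⟩ := UniqueFactorizationMonoid.factors_prod hf
    have hpn : (UniqueFactorizationMonoid.factors f).prod ≠ 0 := fun h => by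
      rw [h, zero_mul] at hu; exact hf hu.symm
    have : f.natDegree = ((UniqueFactorizationMonoid.factors f).prod * ↑u).natDegree := by
      rw [hu]
    rw [this, Polynomial.natDegree_mul hpn u.ne_zero,
      Polynomial.natDegree_eq_zero_of_isUnit u.isUnit, add_zero]
  have hone : ∀ n ∈ (UniqueFactorizationMonoid.factors f).map Polynomial.natDegree,
      1 ≤ n := by
    intro n hn
    obtain ⟨q, hq, rfl⟩ := Multiset.mem_map.mp hn
    have hqi := UniqueFactorizationMonoid.irreducible_of_factor _ hq
    by_contra hcon
    push_neg at hcon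
    have hn0 : Polynomial.natDegree q = 0 := by omega
    obtain ⟨c, rfl⟩ := Polynomial.natDegree_eq_zero.mp hn0
    exact hqi.not_isUnit (Polynomial.isUnit_C.mpr
      (isUnit_iff_ne_zero.mpr (fun h => hqi.ne_zero (by rw [h, map_zero]))))
  calc Multiset.card (UniqueFactorizationMonoid.factors f)
      = Multiset.card ((UniqueFactorizationMonoid.factors f).map Polynomial.natDegree) • 1 := by
        simp
    _ ≤ ((UniqueFactorizationMonoid.factors f).map Polynomial.natDegree).sum :=
        Multiset.card_nsmul_le_sum hone
    _ = f.natDegree := hdeg.trans hassoc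

/-- For a prime `ℓ ≥ 5`, `γ ∈ F_ℓ*` and `f ∈ M_r^γ`, the number of tuples
`(a₁, …, a_r) ∈ F_ℓ^r` for which `g(T)` is not coprime to `f(T)` in `F_ℓ[T]` is at most
`4r·ℓ^(r−1)`. -/
theorem card_not_coprime_le (r ℓ : ℕ) (hr : 1 ≤ r) (hℓ : ℓ.Prime) (hl5 : 5 ≤ ℓ)
    (γ : (ZMod ℓ)ˣ) (f : Polynomial (ZMod ℓ)) (hf : f ∈ Mpoly r ℓ γ) :
    {a : Fin r → ZMod ℓ | ¬ IsCoprime (gpoly r ℓ γ a) f}.ncard ≤ 4 * r * ℓ ^ (r - 1) := by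
  haveI : Fact ℓ.Prime := ⟨hℓ⟩
  haveI : NeZero ℓ := ⟨by omega⟩
  classical
  obtain ⟨k, rfl⟩ : ∃ k, r = k + 1 := ⟨r - 1, by omega⟩
  obtain ⟨hdeg, hc0, -, -⟩ := hf
  have hf0 : f ≠ 0 := fun h => by rw [h] at hc0; simp at hc0
  set F := (UniqueFactorizationMonoid.factors f).toFinset with hF
  set T : Polynomial (ZMod ℓ) → Finset (Fin (k+1) → ZMod ℓ) :=
    fun p => (Set.toFinite {a : Fin (k+1) → ZMod ℓ | p ∣ gpoly (k+1) ℓ γ a}).toFinset with hT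
  have hsub : (Set.toFinite {a : Fin (k+1) → ZMod ℓ |
      ¬ IsCoprime (gpoly (k+1) ℓ γ a) f}).toFinset ⊆ F.biUnion T := by
    intro a ha
    rw [Set.Finite.mem_toFinset, Set.mem_setOf_eq] at ha
    have hg : ¬ IsUnit (EuclideanDomain.gcd (gpoly (k+1) ℓ γ a) f) :=
      fun h => ha (EuclideanDomain.gcd_isUnit_iff.mp h)
    have hg0 : EuclideanDomain.gcd (gpoly (k+1) ℓ γ a) f ≠ 0 := by
      intro h
      have := EuclideanDomain.gcd_dvd_right (gpoly (k+1) ℓ γ a) f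
      rw [h] at this
      exact hf0 (zero_dvd_iff.mp this)
    obtain ⟨q, hq, hqd⟩ := WfDvdMonoid.exists_irreducible_factor hg hg0
    have hqf : q ∣ f := hqd.trans (EuclideanDomain.gcd_dvd_right _ _)
    have hqg : q ∣ gpoly (k+1) ℓ γ a := hqd.trans (EuclideanDomain.gcd_dvd_left _ _)
    obtain ⟨p, hpF, hass⟩ :=
      UniqueFactorizationMonoid.exists_mem_factors_of_dvd hf0 hq hqf
    refine Finset.mem_biUnion.mpr ⟨p, Multiset.mem_toFinset.mpr hpF, ?_⟩
    rw [hT]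
    simp only [Set.Finite.mem_toFinset, Set.mem_setOf_eq]
    exact hass.symm.dvd.trans hqg
  rw [Set.ncard_eq_toFinset_card _ (Set.toFinite _)]
  calc ((Set.toFinite _).toFinset).card
      ≤ (F.biUnion T).card := Finset.card_le_card hsub
    _ ≤ ∑ p ∈ F, (T p).card := Finset.card_biUnion_le
    _ ≤ ∑ _p ∈ F, ℓ ^ k := by
        refine Finset.sum_le_sum fun p hp => ?_
        have h1 : (T p).card = {a : Fin (k+1) → ZMod ℓ | p ∣ gpoly (k+1) ℓ γ a}.ncard :=
          (Set.ncard_eq_toFinset_card _ (Set.toFinite _)).symm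
        rw [h1]
        exact card_dvd_le k γ hc0
          (UniqueFactorizationMonoid.irreducible_of_factor p (Multiset.mem_toFinset.mp hp))
          (UniqueFactorizationMonoid.dvd_of_mem_factors (Multiset.mem_toFinset.mp hp))
    _ = F.card * ℓ ^ k := by rw [Finset.sum_const, smul_eq_mul]
    _ ≤ (2 * (k + 1)) * ℓ ^ k := by
        refine Nat.mul_le_mul_right _ ?_
        exact le_trans (le_trans (Multiset.toFinset_card_le _) (card_factors_le hf0)) hdeg
    _ ≤ 4 * (k + 1) * ℓ ^ (k + 1 - 1) := by
        rw [Nat.add_sub_cancel]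
        exact Nat.mul_le_mul_right _ (by omega)
end
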